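/- Let K_S and K_R be symmetric real matrices of sizes n_S×n_S and n_R×n_R, let B_S be a fixed real m×n_S matrix, and let j_e ∈ ℝ^{n_S}, j_M ∈ ℝ^{n_R} be fixed vectors. Suppose B_R : ℝ → (m×n_R real matrices) and a_S : ℝ → ℝ^{n_S}, a_R : ℝ → ℝ^{n_R}, λ : ℝ → ℝ^m are differentiable functions of the parameter α satisfying, for every α: K_S a_S(α) + B_Sᵀ λ(α) = j_e, K_R a_R(α) − B_R(α)ᵀ λ(α) = j_M, and B_S a_S(α) − B_R(α) a_R(α) = 0. Define the energy E(α) = ½ a_S(α)ᵀ K_S a_S(α) + ½ a_R(α)ᵀ K_R a_R(α) − j_Mᵀ a_R(α) and the torque T(α) = λ(α)ᵀ B_R'(α) a_R(α), where B_R'(α) is the entrywise derivative of B_R at α. Then for every α, E'(α) = j_eᵀ a_S'(α) − T(α). -/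

import Mathlib

/-!
Differentiating the constraint `B_S a_S = B_R a_R` gives `B_S a_S' = B_R' a_R + B_R a_R'`.
By symmetry of `K_S` and `K_R`, `E' = a_S'ᵀ K_S a_S + a_R'ᵀ K_R a_R - j_Mᵀ a_R'`; substituting the
two field equations turns this into `j_eᵀ a_S' - λᵀ (B_S a_S' - B_R a_R')`, and the differentiated
constraint identifies the last term with the torque.
-/

open Matrix

section Calculus

variable {𝕜 : Type*} [NontriviallyNormedField 𝕜] {ι κ : Type*} [Fintype ι]
  {α : 𝕜} {u v : 𝕜 → ι → 𝕜} {u' v' : ι → 𝕜}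

theorem HasDerivAt.dotProduct (hu : HasDerivAt u u' α) (hv : HasDerivAt v v' α) :
    HasDerivAt (fun β => u β ⬝ᵥ v β) (u' ⬝ᵥ v α + u α ⬝ᵥ v') α := by
  have := HasDerivAt.fun_sum (u := Finset.univ) fun i _ =>
    (hasDerivAt_pi.1 hu i).fun_mul (hasDerivAt_pi.1 hv i)
  simpa only [_root_.dotProduct, ← Finset.sum_add_distrib] using this

theorem HasDerivAt.const_dotProduct (w : ι → 𝕜) (hv : HasDerivAt v v' α) :
    HasDerivAt (fun β => w ⬝ᵥ v β) (w ⬝ᵥ v') α := by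
  simpa using (hasDerivAt_const α w).dotProduct hv

theorem HasDerivAt.mulVec {M : 𝕜 → Matrix κ ι 𝕜} {M' : Matrix κ ι 𝕜}
    (hM : ∀ i j, HasDerivAt (fun β => M β i j) (M' i j) α) (hu : HasDerivAt u u' α) :
    HasDerivAt (fun β => M β *ᵥ u β) (M' *ᵥ u α + M α *ᵥ u') α :=
  hasDerivAt_pi.2 fun i => (hasDerivAt_pi.2 (hM i)).dotProduct hu

theorem HasDerivAt.const_mulVec (A : Matrix κ ι 𝕜) (hu : HasDerivAt u u' α) :
    HasDerivAt (fun β => A *ᵥ u β) (A *ᵥ u') α := by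
  simpa using HasDerivAt.mulVec (M' := 0) (fun i j => hasDerivAt_const α (A i j)) hu

theorem Matrix.IsSymm.dotProduct_mulVec_comm {K : Matrix ι ι 𝕜} (hK : K.IsSymm) (x y : ι → 𝕜) :
    x ⬝ᵥ K *ᵥ y = y ⬝ᵥ K *ᵥ x := by
  rw [← dotProduct_transpose_mulVec, hK.eq]

theorem HasDerivAt.dotProduct_mulVec_self {K : Matrix ι ι 𝕜} (hK : K.IsSymm)
    (hu : HasDerivAt u u' α) :
    HasDerivAt (fun β => u β ⬝ᵥ K *ᵥ u β) (2 * (u' ⬝ᵥ K *ᵥ u α)) α := by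
  convert hu.dotProduct (hu.const_mulVec K) using 1
  rw [hK.dotProduct_mulVec_comm (u α), two_mul]

end Calculus

theorem discrete_energy_balance_general
    (nS nR m : ℕ)
    (K_S : Matrix (Fin nS) (Fin nS) ℝ) (K_R : Matrix (Fin nR) (Fin nR) ℝ)
    (hKS_sym : K_S.IsSymm) (hKR_sym : K_R.IsSymm)
    (B_S : Matrix (Fin m) (Fin nS) ℝ)
    (j_e : Fin nS → ℝ) (j_M : Fin nR → ℝ)
    (B_R B_R' : ℝ → Matrix (Fin m) (Fin nR) ℝ)
    (aS aS' : ℝ → Fin nS → ℝ) (aR aR' : ℝ → Fin nR → ℝ)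
    (lam : ℝ → Fin m → ℝ)
    (hBR : ∀ (i : Fin m) (j : Fin nR) (α : ℝ),
      HasDerivAt (fun β => B_R β i j) (B_R' α i j) α)
    (haS : ∀ α : ℝ, HasDerivAt aS (aS' α) α)
    (haR : ∀ α : ℝ, HasDerivAt aR (aR' α) α)
    (heq1 : ∀ α : ℝ, K_S *ᵥ aS α + B_Sᵀ *ᵥ lam α = j_e)
    (heq2 : ∀ α : ℝ, K_R *ᵥ aR α - (B_R α)ᵀ *ᵥ lam α = j_M)
    (heq3 : ∀ α : ℝ, B_S *ᵥ aS α - B_R α *ᵥ aR α = 0)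
    (E T : ℝ → ℝ)
    (hE : ∀ α : ℝ, E α = (1/2) * (aS α ⬝ᵥ (K_S *ᵥ aS α))
      + (1/2) * (aR α ⬝ᵥ (K_R *ᵥ aR α)) - j_M ⬝ᵥ aR α)
    (hT : ∀ α : ℝ, T α = lam α ⬝ᵥ (B_R' α *ᵥ aR α)) :
    ∀ α : ℝ, HasDerivAt E (j_e ⬝ᵥ aS' α - T α) α := by
  intro α
  have hcoupling : B_S *ᵥ aS' α = B_R' α *ᵥ aR α + B_R α *ᵥ aR' α := by
    have hconstraint : (fun β => B_S *ᵥ aS β) = fun β => B_R β *ᵥ aR β :=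
      funext fun β => sub_eq_zero.1 (heq3 β)
    exact (hconstraint ▸ (haS α).const_mulVec B_S).unique
      (HasDerivAt.mulVec (fun i j => hBR i j α) (haR α))
  have hE' : HasDerivAt E (aS' α ⬝ᵥ K_S *ᵥ aS α + aR' α ⬝ᵥ K_R *ᵥ aR α - j_M ⬝ᵥ aR' α) α := by
    rw [funext hE]
    refine ((((haS α).dotProduct_mulVec_self hKS_sym).const_mul (1/2)).fun_add
      (((haR α).dotProduct_mulVec_self hKR_sym).const_mul (1/2))).fun_sub
      ((haR α).const_dotProduct j_M) |>.congr_deriv ?_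
    ring
  refine hE'.congr_deriv ?_
  calc aS' α ⬝ᵥ K_S *ᵥ aS α + aR' α ⬝ᵥ K_R *ᵥ aR α - j_M ⬝ᵥ aR' α
      = aS' α ⬝ᵥ (j_e - B_Sᵀ *ᵥ lam α) + aR' α ⬝ᵥ (j_M + (B_R α)ᵀ *ᵥ lam α)
          - j_M ⬝ᵥ aR' α := by
        rw [← heq1 α, ← heq2 α, add_sub_cancel_right, sub_add_cancel]
    _ = j_e ⬝ᵥ aS' α - lam α ⬝ᵥ (B_S *ᵥ aS' α - B_R α *ᵥ aR' α) := by
        simp only [dotProduct_sub, dotProduct_add, dotProduct_transpose_mulVec]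
        rw [dotProduct_comm (aS' α), dotProduct_comm (aR' α)]
        ring
    _ = j_e ⬝ᵥ aS' α - T α := by
        rw [hcoupling, add_sub_cancel_right, hT]

/-- Algebraic discrete energy balance (Lemma 2 of the paper): for differentiable
solutions of the parameter-dependent saddle-point system of the harmonic mortar
discretization, the derivative of the energy `E(α)` with respect to the rotation
angle equals the electric work `j_eᵀ a_S'(α)` minus the torque
`T(α) = λ(α)ᵀ B_R'(α) a_R(α)`. -/
theorem discrete_energy_balance
    (nS nR m : ℕ)
    (K_S : Matrix (Fin nS) (Fin nS) ℝ) (K_R : Matrix (Fin nR) (Fin nR) ℝ)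
    (hKS_sym : K_S.IsSymm) (hKR_sym : K_R.IsSymm)
    (B_S : Matrix (Fin m) (Fin nS) ℝ)
    (j_e : Fin nS → ℝ) (j_M : Fin nR → ℝ)
    (B_R B_R' : ℝ → Matrix (Fin m) (Fin nR) ℝ)
    (aS aS' : ℝ → Fin nS → ℝ) (aR aR' : ℝ → Fin nR → ℝ)
    (lam lam' : ℝ → Fin m → ℝ)
    (hBR : ∀ (i : Fin m) (j : Fin nR) (α : ℝ),
      HasDerivAt (fun β => B_R β i j) (B_R' α i j) α)
    (haS : ∀ α : ℝ, HasDerivAt aS (aS' α) α)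
    (haR : ∀ α : ℝ, HasDerivAt aR (aR' α) α)
    (hlam : ∀ α : ℝ, HasDerivAt lam (lam' α) α)
    (heq1 : ∀ α : ℝ, K_S *ᵥ aS α + B_Sᵀ *ᵥ lam α = j_e)
    (heq2 : ∀ α : ℝ, K_R *ᵥ aR α - (B_R α)ᵀ *ᵥ lam α = j_M)
    (heq3 : ∀ α : ℝ, B_S *ᵥ aS α - B_R α *ᵥ aR α = 0)
    (E T : ℝ → ℝ)
    (hE : ∀ α : ℝ, E α = (1/2) * (aS α ⬝ᵥ (K_S *ᵥ aS α))
      + (1/2) * (aR α ⬝ᵥ (K_R *ᵥ aR α)) - j_M ⬝ᵥ aR α)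
    (hT : ∀ α : ℝ, T α = lam α ⬝ᵥ (B_R' α *ᵥ aR α)) :
    ∀ α : ℝ, HasDerivAt E (j_e ⬝ᵥ aS' α - T α) α :=
  discrete_energy_balance_general nS nR m K_S K_R hKS_sym hKR_sym B_S j_e j_M B_R B_R' aS aS' aR aR'
    lam hBR haS haR heq1 heq2 heq3 E T hE hT
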